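/- (Corollary 2: fast storage forces inexactness.) Consider the storage scheduling LP with η < 1 and at least one time period with strictly negative price. Suppose the storage is so fast that ρ·S_lb + Δt·η^C·P^C_max > S_ub and ρ·S_ub − Δt·(1/η^D)·P^D_max < S_lb. Then every optimal solution of the LP exhibits simultaneous charge and discharge at every time period t with C_t < 0. -/

import Mathlib

open Finset

def feasible (T : ℕ) (Δt ρ ηC ηD Slb Sub Sinit PC PD : ℝ)
    (s pC pD : ℕ → ℝ) : Prop :=
  s 0 = Sinit ∧
  (∀ t ∈ Icc 1 T, s t = ρ * s (t - 1) + Δt * (ηC * pC t - (1 / ηD) * pD t)) ∧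
  (∀ t ∈ Icc 1 T, Slb ≤ s t ∧ s t ≤ Sub) ∧
  (∀ t ∈ Icc 1 T, 0 ≤ pC t ∧ pC t ≤ PC) ∧
  (∀ t ∈ Icc 1 T, 0 ≤ pD t ∧ pD t ≤ PD)

def objective (T : ℕ) (Δt : ℝ) (C : ℕ → ℝ) (pC pD : ℕ → ℝ) : ℝ :=
  ∑ t ∈ Icc 1 T, Δt * C t * (pD t - pC t)

def optimal (T : ℕ) (Δt ρ ηC ηD Slb Sub Sinit PC PD : ℝ) (C : ℕ → ℝ)
    (s pC pD : ℕ → ℝ) : Prop :=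
  feasible T Δt ρ ηC ηD Slb Sub Sinit PC PD s pC pD ∧
  ∀ s' pC' pD', feasible T Δt ρ ηC ηD Slb Sub Sinit PC PD s' pC' pD' →
    objective T Δt C pC' pD' ≤ objective T Δt C pC pD

/-!
At a period with negative price, an optimal schedule runs the charger or the discharger at full
power: otherwise one could raise `pC t` by `ε` and `pD t` by `ηC * ηD * ε`, which leaves the
state of charge unchanged and, since `ηC * ηD < 1`, earns `-Δt * C t * (1 - ηC * ηD) * ε > 0`.
If the storage is fast, full charge with no discharge overflows `Sub` within one step, and full
discharge with no charge drains below `Slb`; so the other power is strictly positive as well.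
-/

theorem objective_update (T : ℕ) (Δt : ℝ) (C pC pD : ℕ → ℝ) {t : ℕ} (ht : t ∈ Icc 1 T)
    (x y : ℝ) :
    objective T Δt C (Function.update pC t x) (Function.update pD t y) =
      objective T Δt C pC pD + Δt * C t * ((y - pD t) - (x - pC t)) := by
  have hdiff : ∀ u ∈ Icc 1 T,
      Δt * C u * (Function.update pD t y u - Function.update pC t x u) -
          Δt * C u * (pD u - pC u) =
        if u = t then Δt * C t * ((y - pD t) - (x - pC t)) else 0 := by
    intro u _
    by_cases hu : u = t
    · subst hu; simp only [Function.update_self, if_true]; ring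
    · simp [hu]
  rw [← sub_eq_iff_eq_add', objective, objective, ← sum_sub_distrib, sum_congr rfl hdiff,
    sum_ite_eq' _ _ _, if_pos ht]

section Feasible

variable {T : ℕ} {Δt ρ ηC ηD Slb Sub Sinit PC PD : ℝ} {s pC pD : ℕ → ℝ}

theorem feasible.prev_mem_bounds (hf : feasible T Δt ρ ηC ηD Slb Sub Sinit PC PD s pC pD)
    (hinit0 : Slb ≤ Sinit) (hinit1 : Sinit ≤ Sub) {t : ℕ} (ht : t ∈ Icc 1 T) :
    Slb ≤ s (t - 1) ∧ s (t - 1) ≤ Sub := by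
  obtain ⟨ht1, htT⟩ := mem_Icc.mp ht
  rcases ht1.eq_or_lt with rfl | ht1
  · exact hf.1 ▸ ⟨hinit0, hinit1⟩
  · exact hf.2.2.1 (t - 1) (mem_Icc.mpr ⟨by omega, by omega⟩)

theorem feasible.update_simultaneous (hf : feasible T Δt ρ ηC ηD Slb Sub Sinit PC PD s pC pD)
    (hηC : 0 ≤ ηC) (hηD : 0 < ηD) {t : ℕ} {ε : ℝ} (hε : 0 ≤ ε) (hεC : pC t + ε ≤ PC)
    (hεD : pD t + ηC * ηD * ε ≤ PD) :
    feasible T Δt ρ ηC ηD Slb Sub Sinit PC PD s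
      (Function.update pC t (pC t + ε)) (Function.update pD t (pD t + ηC * ηD * ε)) := by
  obtain ⟨hs0, hdyn, hs, hpC, hpD⟩ := hf
  refine ⟨hs0, fun u hu => ?_, hs, fun u hu => ?_, fun u hu => ?_⟩ <;>
    rcases eq_or_ne u t with rfl | hut
  · simp only [Function.update_self]; rw [hdyn u hu]; field_simp; ring
  · simp only [Function.update_of_ne hut]; exact hdyn u hu
  · simp only [Function.update_self]; exact ⟨by linarith [(hpC u hu).1], hεC⟩
  · simp only [Function.update_of_ne hut]; exact hpC u hu
  · simp only [Function.update_self]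
    exact ⟨by linarith [(hpD u hu).1, mul_nonneg (mul_nonneg hηC hηD.le) hε], hεD⟩
  · simp only [Function.update_of_ne hut]; exact hpD u hu

end Feasible

theorem optimal.pC_eq_or_pD_eq_of_neg {T : ℕ} {Δt ρ ηC ηD Slb Sub Sinit PC PD : ℝ}
    {C s pC pD : ℕ → ℝ} (hopt : optimal T Δt ρ ηC ηD Slb Sub Sinit PC PD C s pC pD)
    (hΔt : 0 < Δt) (hηC : 0 < ηC) (hηD : 0 < ηD) (hη : ηC * ηD < 1) {t : ℕ}
    (ht : t ∈ Icc 1 T) (hCt : C t < 0) :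
    pC t = PC ∨ pD t = PD := by
  obtain ⟨hf, hbest⟩ := hopt
  by_contra! hne
  have hpC : pC t < PC := (hf.2.2.2.1 t ht).2.lt_of_ne hne.1
  have hpD : pD t < PD := (hf.2.2.2.2 t ht).2.lt_of_ne hne.2
  have hη0 : 0 < ηC * ηD := mul_pos hηC hηD
  set ε := min (PC - pC t) ((PD - pD t) / (ηC * ηD))
  have hε : 0 < ε := lt_min (by linarith) (div_pos (by linarith) hη0)
  have hεC : pC t + ε ≤ PC := by linarith [min_le_left (PC - pC t) ((PD - pD t) / (ηC * ηD))]
  have hεD : pD t + ηC * ηD * ε ≤ PD := by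
    have := min_le_right (PC - pC t) ((PD - pD t) / (ηC * ηD))
    rw [le_div_iff₀ hη0] at this
    linarith
  have hgain : 0 < Δt * C t * ((pD t + ηC * ηD * ε - pD t) - (pC t + ε - pC t)) := by
    have : (pD t + ηC * ηD * ε - pD t) - (pC t + ε - pC t) = -((1 - ηC * ηD) * ε) := by ring
    rw [this]
    exact mul_pos_of_neg_of_neg (mul_neg_of_pos_of_neg hΔt hCt)
      (neg_neg_of_pos (mul_pos (by linarith) hε))
  have hle := hbest s _ _ (hf.update_simultaneous hηC.le hηD hε.le hεC hεD)
  rw [objective_update T Δt C pC pD ht] at hle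
  linarith

theorem pD_pos_of_full_charge {ρ Δt ηC ηD Slb Sub PC sPrev sNext pD : ℝ} (hρ : 0 ≤ ρ)
    (hΔt : 0 ≤ Δt) (hηD : 0 ≤ ηD) (hfast : Sub < ρ * Slb + Δt * ηC * PC) (hPrev : Slb ≤ sPrev)
    (hNext : sNext ≤ Sub) (hdyn : sNext = ρ * sPrev + Δt * (ηC * PC - 1 / ηD * pD)) :
    0 < pD := by
  have hloss : 0 < Δt * (1 / ηD) * pD := by
    nlinarith [mul_le_mul_of_nonneg_left hPrev hρ]
  exact pos_of_mul_pos_right hloss (by positivity)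

theorem pC_pos_of_full_discharge {ρ Δt ηC ηD Slb Sub PD sPrev sNext pC : ℝ} (hρ : 0 ≤ ρ)
    (hΔt : 0 ≤ Δt) (hηC : 0 ≤ ηC) (hfast : ρ * Sub - Δt * (1 / ηD) * PD < Slb)
    (hPrev : sPrev ≤ Sub) (hNext : Slb ≤ sNext)
    (hdyn : sNext = ρ * sPrev + Δt * (ηC * pC - 1 / ηD * PD)) :
    0 < pC := by
  have hgain : 0 < Δt * ηC * pC := by
    nlinarith [mul_le_mul_of_nonneg_left hPrev hρ]
  exact pos_of_mul_pos_right hgain (by positivity)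

theorem stmt8_general (T : ℕ) (Δt ρ ηC ηD Slb Sub Sinit PC PD : ℝ) (C : ℕ → ℝ)
    (hΔt : 0 < Δt) (hρ0 : 0 < ρ)
    (hηC0 : 0 < ηC) (hηD0 : 0 < ηD)
    (hη : ηC * ηD < 1)
    (hPC : 0 < PC) (hPD : 0 < PD)
    (hinit0 : Slb ≤ Sinit) (hinit1 : Sinit ≤ Sub)
    (hfastC : Sub < ρ * Slb + Δt * ηC * PC)
    (hfastD : ρ * Sub - Δt * (1 / ηD) * PD < Slb) :
    ∀ s pC pD : ℕ → ℝ,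
      optimal T Δt ρ ηC ηD Slb Sub Sinit PC PD C s pC pD →
      ∀ t ∈ Icc 1 T, C t < 0 → 0 < pC t ∧ 0 < pD t := by
  intro s pC pD hopt t ht hCt
  have hdyn := hopt.1.2.1 t ht
  have hst := hopt.1.2.2.1 t ht
  have hprev := hopt.1.prev_mem_bounds hinit0 hinit1 ht
  rcases hopt.pC_eq_or_pD_eq_of_neg hΔt hηC0 hηD0 hη ht hCt with hfull | hfull
  · rw [hfull] at hdyn ⊢
    exact ⟨hPC, pD_pos_of_full_charge hρ0.le hΔt.le hηD0.le hfastC hprev.1 hst.2 hdyn⟩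
  · rw [hfull] at hdyn ⊢
    exact ⟨pC_pos_of_full_discharge hρ0.le hΔt.le hηC0.le hfastD hprev.2 hst.1 hdyn, hPD⟩

theorem stmt8 (T : ℕ) (Δt ρ ηC ηD Slb Sub Sinit PC PD : ℝ) (C : ℕ → ℝ)
    (hΔt : 0 < Δt) (hρ0 : 0 < ρ) (hρ1 : ρ ≤ 1)
    (hηC0 : 0 < ηC) (hηC1 : ηC ≤ 1) (hηD0 : 0 < ηD) (hηD1 : ηD ≤ 1)
    (hη : ηC * ηD < 1)
    (hS0 : 0 ≤ Slb) (hS : Slb < Sub) (hPC : 0 < PC) (hPD : 0 < PD)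
    (hinit0 : Slb ≤ Sinit) (hinit1 : Sinit ≤ Sub)
    (hneg : ∃ t ∈ Icc 1 T, C t < 0)
    (hfastC : Sub < ρ * Slb + Δt * ηC * PC)
    (hfastD : ρ * Sub - Δt * (1 / ηD) * PD < Slb) :
    ∀ s pC pD : ℕ → ℝ,
      optimal T Δt ρ ηC ηD Slb Sub Sinit PC PD C s pC pD →
      ∀ t ∈ Icc 1 T, C t < 0 → 0 < pC t ∧ 0 < pD t :=
  stmt8_general T Δt ρ ηC ηD Slb Sub Sinit PC PD C hΔt hρ0 hηC0 hηD0 hη hPC hPD hinit0 hinit1 hfastC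
    hfastD
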